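/- arXiv:2002.05516 — 2 statements merged into one kernel-verified Lean document; each statement's English description precedes it below -/
import Mathlib

section
/- Let each f_i : ℝ^d → ℝ be differentiable, L-smooth and μ-strongly convex with μ > 0. For λ ≥ 0 let x(λ) denote the unique minimizer of F = f + λψ, and let x(∞) ∈ ℝ^{nd} have all n blocks equal to the unique minimizer of P(z) = (1/n)·Σ_{i=1}^n f_i(z). Then the map λ ↦ f(x(λ)) is non-decreasing on [0,∞), and for all λ ≥ 0 one has f(x(λ)) ≤ f(x(∞)). -/
open scoped BigOperators
open Finset

noncomputable section

/-- `Vec d` is the Euclidean space `ℝ^d`. -/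
abbrev Vec (d : ℕ) := EuclideanSpace ℝ (Fin d)

/-- `Blk n d` is `ℝ^{nd}`, viewed as `n`-tuples of vectors in `ℝ^d`
with the Euclidean norm `‖x‖² = Σᵢ ‖xᵢ‖²`. -/
abbrev Blk (n d : ℕ) := PiLp 2 (fun _ : Fin n => Vec d)

/-- the block average `x̄ = (1/n) Σᵢ xᵢ`. -/
def blkAvg {n d : ℕ} (x : Blk n d) : Vec d := (n : ℝ)⁻¹ • ∑ i, x i

/-- `f(x) = (1/n) Σᵢ fᵢ(xᵢ)`. -/
def fTot {n d : ℕ} (f : Fin n → Vec d → ℝ) (x : Blk n d) : ℝ :=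
  (n : ℝ)⁻¹ * ∑ i, f i (x i)

/-- `ψ(x) = (1/(2n)) Σᵢ ‖xᵢ - x̄‖²`. -/
def psi {n d : ℕ} (x : Blk n d) : ℝ :=
  (2 * n : ℝ)⁻¹ * ∑ i, ‖x i - blkAvg x‖ ^ 2

/-- `F(x) = f(x) + λ ψ(x)`. -/
def FF {n d : ℕ} (f : Fin n → Vec d → ℝ) (lam : ℝ) (x : Blk n d) : ℝ :=
  fTot f x + lam * psi x

/-- the gradient of `f`: its `i`-th block is `(1/n) ∇fᵢ(xᵢ)`, where `g i` is
the gradient of `fᵢ`. -/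
def gradTot {n d : ℕ} (g : Fin n → Vec d → Vec d) (x : Blk n d) : Blk n d :=
  WithLp.toLp 2 (fun i => (n : ℝ)⁻¹ • g i (x i))

/-- the gradient of `ψ`: its `i`-th block is `(1/n) (xᵢ - x̄)`. -/
def gradPsi {n d : ℕ} (x : Blk n d) : Blk n d :=
  WithLp.toLp 2 (fun i => (n : ℝ)⁻¹ • (x i - blkAvg x))

/-!
Monotonicity is the exchange argument: testing the optimality of `x(θ)` for `F_θ` at `x(λ)` and
of `x(λ)` for `F_λ` at `x(θ)` shows `ψ(x(λ)) ≤ ψ(x(θ))`, hence `f(x(θ)) ≤ f(x(λ))` when `θ < λ`.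
For `θ = λ` one needs uniqueness of the minimizer: `f` is a separable sum of `μ`-strongly convex
functions, hence `(μ/n)`-strongly convex on `ℝ^{nd}`, and `ψ` is convex. Finally `x(∞)` is a
consensus point, so `ψ(x(∞)) = 0` and `f(x(λ)) ≤ F(x(λ)) ≤ F(x(∞)) = f(x(∞))`.
-/

lemma ConvexOn.fun_sum {E ι : Type*} [AddCommGroup E] [Module ℝ E] {s : Set E} {t : Finset ι}
    {f : ι → E → ℝ} (hs : Convex ℝ s) (hf : ∀ i ∈ t, ConvexOn ℝ s (f i)) :
    ConvexOn ℝ s (fun x => ∑ i ∈ t, f i x) := by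
  simpa only [← Finset.sum_apply] using
    Finset.sum_induction f (ConvexOn ℝ s) (fun _ _ => ConvexOn.add) (convexOn_const 0 hs) hf

lemma StrongConvexOn.const_mul {E : Type*} [NormedAddCommGroup E] [NormedSpace ℝ E] {s : Set E}
    {m c : ℝ} {f : E → ℝ} (hf : StrongConvexOn s m f) (hc : 0 ≤ c) :
    StrongConvexOn s (c * m) (fun x => c * f x) := by
  refine ⟨hf.1, fun x hx y hy a b ha hb hab => ?_⟩
  have h := mul_le_mul_of_nonneg_left (hf.2 hx hy ha hb hab) hc
  simp only [smul_eq_mul] at h ⊢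
  linarith

lemma strongConvexOn_univ_piLp_sum {ι : Type*} [Fintype ι] {E : ι → Type*}
    [∀ i, NormedAddCommGroup (E i)] [∀ i, InnerProductSpace ℝ (E i)] {m : ℝ}
    {f : ∀ i, E i → ℝ} (hf : ∀ i, StrongConvexOn Set.univ m (f i)) :
    StrongConvexOn Set.univ m (fun x : PiLp 2 E => ∑ i, f i (x i)) := by
  simp only [strongConvexOn_iff_convex] at hf ⊢
  have hsplit : ∀ x : PiLp 2 E, ∑ i, f i (x i) - m / 2 * ‖x‖ ^ 2
      = ∑ i, (f i (x i) - m / 2 * ‖x i‖ ^ 2) := fun x => by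
    rw [PiLp.norm_sq_eq_of_L2, Finset.mul_sum, Finset.sum_sub_distrib]
  simp only [hsplit]
  exact ConvexOn.fun_sum convex_univ fun i _ => (hf i).comp_linearMap (PiLp.projₗ 2 E i)

lemma le_of_isMin_add_mul_of_lt {X : Type*} {f p : X → ℝ} {θ lam : ℝ} {x y : X}
    (hθ : 0 ≤ θ) (hlt : θ < lam) (hx : ∀ w, f x + θ * p x ≤ f w + θ * p w)
    (hy : ∀ w, f y + lam * p y ≤ f w + lam * p w) : f x ≤ f y := by
  -- adding `hx y` and `hy x` gives `(lam - θ) * (p y - p x) ≤ 0`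
  have hp : p y ≤ p x := by
    by_contra! h
    nlinarith [hx y, hy x]
  nlinarith [hx y, mul_le_mul_of_nonneg_left hp hθ]

section Penalty

variable {n d : ℕ} {f : Fin n → Vec d → ℝ} {μ c : ℝ}

lemma strongConvexOn_fTot (hsc : ∀ i, StrongConvexOn Set.univ μ (f i)) :
    StrongConvexOn Set.univ ((n : ℝ)⁻¹ * μ) (fTot f) :=
  (strongConvexOn_univ_piLp_sum hsc).const_mul (by positivity)

lemma psi_nonneg (x : Blk n d) : 0 ≤ psi x := by
  unfold psi
  have := Finset.sum_nonneg fun i (_ : i ∈ Finset.univ) => sq_nonneg ‖x i - blkAvg x‖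
  positivity

lemma psi_const (z : Vec d) : psi (WithLp.toLp 2 (fun _ => z) : Blk n d) = 0 := by
  rcases n.eq_zero_or_pos with rfl | hn
  · simp [psi]
  · have havg : blkAvg (WithLp.toLp 2 (fun _ => z) : Blk n d) = z := by
      simp [blkAvg, Finset.sum_const, ← Nat.cast_smul_eq_nsmul ℝ, smul_smul, hn.ne']
    simp [psi, havg]

lemma convexOn_psi : ConvexOn ℝ Set.univ (psi : Blk n d → ℝ) := by
  let dev (i : Fin n) : Blk n d →ₗ[ℝ] Vec d :=
    PiLp.projₗ 2 _ i - (n : ℝ)⁻¹ • ∑ j, PiLp.projₗ 2 _ j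
  have hdev : ∀ i x, dev i x = x i - blkAvg x := fun i x => by
    simp [dev, blkAvg]
  have hsq : ConvexOn ℝ Set.univ fun v : Vec d => ‖v‖ ^ 2 :=
    convexOn_univ_norm.pow (fun _ _ => norm_nonneg _) 2
  have := (ConvexOn.fun_sum (t := Finset.univ) convex_univ
    fun i _ => hsq.comp_linearMap (dev i)).smul (c := (2 * n : ℝ)⁻¹) (by positivity)
  simp only [Function.comp_apply, hdev, smul_eq_mul] at this
  exact this

lemma strongConvexOn_FF (hsc : ∀ i, StrongConvexOn Set.univ μ (f i)) (hc : 0 ≤ c) :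
    StrongConvexOn Set.univ ((n : ℝ)⁻¹ * μ) (FF f c) := by
  rw [strongConvexOn_iff_convex]
  have := (strongConvexOn_iff_convex.1 (strongConvexOn_fTot hsc)).add (convexOn_psi.smul hc)
  refine this.congr fun x _ => ?_
  simp only [FF, Pi.add_apply, smul_eq_mul]
  ring

lemma FF_minimizer_unique (hn : 0 < n) (hμ : 0 < μ)
    (hsc : ∀ i, StrongConvexOn Set.univ μ (f i)) (hc : 0 ≤ c) {x y : Blk n d}
    (hx : ∀ w, FF f c x ≤ FF f c w) (hy : ∀ w, FF f c y ≤ FF f c w) : x = y :=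
  ((strongConvexOn_FF hsc hc).strictConvexOn (by positivity)).eq_of_isMinOn
    (isMinOn_univ_iff.2 hx) (isMinOn_univ_iff.2 hy) trivial trivial

lemma fTot_le_const_of_isMin_FF (hc : 0 ≤ c) {x : Blk n d} (hx : ∀ w, FF f c x ≤ FF f c w)
    (z : Vec d) : fTot f x ≤ fTot f (WithLp.toLp 2 (fun _ => z) : Blk n d) := by
  have h := hx (WithLp.toLp 2 fun _ => z)
  rw [FF, FF, psi_const, mul_zero, add_zero] at h
  linarith [mul_nonneg hc (psi_nonneg x)]

end Penalty

theorem stmt3_general (n d : ℕ) (hn : 0 < n) (μ : ℝ) (hμ : 0 < μ)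
    (f : Fin n → Vec d → ℝ)
    (hsc : ∀ i, StrongConvexOn Set.univ μ (f i))
    (zinf : Vec d)
    (θ lam : ℝ) (hθ : 0 ≤ θ) (hθlam : θ ≤ lam)
    (xθ xlam : Blk n d)
    (hxθ : ∀ y : Blk n d, FF f θ xθ ≤ FF f θ y)
    (hxlam : ∀ y : Blk n d, FF f lam xlam ≤ FF f lam y) :
    fTot f xθ ≤ fTot f xlam ∧ fTot f xlam ≤ fTot f (WithLp.toLp 2 (fun _ => zinf) : Blk n d) := by
  refine ⟨?_, fTot_le_const_of_isMin_FF (hθ.trans hθlam) hxlam zinf⟩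
  rcases hθlam.eq_or_lt with rfl | hlt
  · rw [FF_minimizer_unique hn hμ hsc hθ hxθ hxlam]
  · exact le_of_isMin_add_mul_of_lt hθ hlt hxθ hxlam

/-- the map `λ ↦ f(x(λ))` is non-decreasing on `[0,∞)`: if `0 ≤ θ ≤ λ`
with `xθ`, `xlam` the respective minimizers of `f + θψ` and `f + λψ`, then
`f(x(θ)) ≤ f(x(λ))`; moreover `f(x(λ)) ≤ f(x(∞))`, where `x(∞)` has all blocks equal
to the minimizer `zinf` of `P(z) = (1/n) Σᵢ fᵢ(z)`. -/
theorem stmt3 (n d : ℕ) (hn : 0 < n) (L μ : ℝ) (hμ : 0 < μ)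
    (f : Fin n → Vec d → ℝ) (g : Fin n → Vec d → Vec d)
    (hgrad : ∀ i (x : Vec d), HasGradientAt (f i) (g i x) x)
    (hsmooth : ∀ i (x y : Vec d), ‖g i x - g i y‖ ≤ L * ‖x - y‖)
    (hsc : ∀ i, StrongConvexOn Set.univ μ (f i))
    (zinf : Vec d)
    (hzinf : ∀ z : Vec d, (n : ℝ)⁻¹ * ∑ i, f i zinf ≤ (n : ℝ)⁻¹ * ∑ i, f i z)
    (θ lam : ℝ) (hθ : 0 ≤ θ) (hθlam : θ ≤ lam)
    (xθ xlam : Blk n d)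
    (hxθ : ∀ y : Blk n d, FF f θ xθ ≤ FF f θ y)
    (hxlam : ∀ y : Blk n d, FF f lam xlam ≤ FF f lam y) :
    fTot f xθ ≤ fTot f xlam ∧ fTot f xlam ≤ fTot f (WithLp.toLp 2 (fun _ => zinf) : Blk n d) :=
  stmt3_general n d hn μ hμ f hsc zinf θ lam hθ hθlam xθ xlam hxθ hxlam
end
end

section
/- Let each f_i : ℝ^d → ℝ be differentiable, L-smooth and μ-strongly convex with μ > 0, let λ ≥ 0, 0 < p < 1, and let x(λ) be the unique minimizer of F = f + λψ. Set 𝓛 = (1/n)·max{L/(1−p), λ/p} and σ² = (1/n²)·Σ_{i=1}^n [ (1/(1−p))·‖∇f_i(x_i(λ))‖² + (λ²/p)·‖x_i(λ) − x̄(λ)‖² ]. Let (ξ_k)_{k≥0} be i.i.d. Bernoulli random variables with P(ξ_k = 1) = p, and define the random sequence (x^k) in ℝ^{nd} by an arbitrary deterministic x^0 and x^{k+1} = x^k − α·(λ∇ψ(x^k)/p) if ξ_k = 1 and x^{k+1} = x^k − α·(∇f(x^k)/(1−p)) if ξ_k = 0. If 0 < α ≤ 1/(2𝓛), then for every k ≥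 0: E‖x^k − x(λ)‖² ≤ (1 − αμ/n)^k·‖x^0 − x(λ)‖² + 2nασ²/μ. -/
open scoped BigOperators
open Finset

noncomputable section

/-- The L2GD iterates driven by the coin tosses `ξ`: if `ξ k = true` (probability `p`)
the aggregation step `x - α (λ/p) ∇ψ(x)` is taken; if `ξ k = false` (probability
`1−p`) the local GD step `x - α/(1−p) ∇f(x)` is taken. -/
def l2gdIter {n d : ℕ} (g : Fin n → Vec d → Vec d) (lam p α : ℝ)
    (x0 : Blk n d) (ξ : ℕ → Bool) : ℕ → Blk n d
  | 0 => x0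
  | k + 1 =>
    if ξ k then
      l2gdIter g lam p α x0 ξ k - α • (p⁻¹ • (lam • gradPsi (l2gdIter g lam p α x0 ξ k)))
    else
      l2gdIter g lam p α x0 ξ k - α • ((1 - p)⁻¹ • gradTot g (l2gdIter g lam p α x0 ξ k))


/-!
L2GD is SGD on `F = f + λψ` with the unbiased two-point gradient estimator equal to `λ∇ψ/p`
with probability `p` and to `∇f/(1-p)` otherwise. `F` is `μ/n`-strongly convex, and cocoercivity
of the `∇fᵢ` together with the exact quadratic form of `ψ` (whose gradient is a multiple of an
orthogonal projection) gives the expected smoothness bound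
`E‖G(x) - G(x(λ))‖² ≤ 2𝓛 (F x - F x(λ))`. The usual one-step SGD estimate then reads
`E‖x⁺ - x(λ)‖² ≤ (1 - αμ/n) ‖x - x(λ)‖² + 2α²σ²`; averaging over the last coin toss and unrolling
gives the claim, because `2nασ²/μ` is the fixed point of `C ↦ (1 - αμ/n) C + 2α²σ²`.
-/

open scoped RealInnerProductSpace
open Set

section ConvexAnalysis

variable {E : Type*} [NormedAddCommGroup E] [InnerProductSpace ℝ E] [CompleteSpace E]
  {h : E → ℝ} {G : E → E} {g u v : E} {μ L : ℝ}

lemma HasGradientAt.hasDerivAt_comp_lineMap {t : ℝ}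
    (hg : HasGradientAt h g (AffineMap.lineMap u v t)) :
    HasDerivAt (fun s : ℝ => h (AffineMap.lineMap u v s)) ⟪g, v - u⟫ t :=
  hg.hasFDerivAt.comp_hasDerivAt t AffineMap.hasDerivAt_lineMap

lemma ConvexOn.add_inner_sub_le (hh : ConvexOn ℝ univ h) (hg : HasGradientAt h g u) (v : E) :
    h u + ⟪g, v - u⟫ ≤ h v := by
  have hline : ConvexOn ℝ univ (fun s : ℝ => h (AffineMap.lineMap u v s)) :=
    hh.comp_affineMap (AffineMap.lineMap u v)
  have hd := HasGradientAt.hasDerivAt_comp_lineMap (v := v) (t := 0)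
    (by rwa [AffineMap.lineMap_apply_zero])
  have := hline.le_slope_of_hasDerivAt (mem_univ 0) (mem_univ 1) one_pos hd
  simp [slope_def_field] at this
  linarith

lemma hasGradientAt_half_mul_norm_sq (c : ℝ) (x : E) :
    HasGradientAt (fun y : E => c / 2 * ‖y‖ ^ 2) (c • x) x := by
  refine ((hasStrictFDerivAt_norm_sq x).hasFDerivAt.const_mul (c / 2)).congr_fderiv ?_
  ext y
  simp
  ring

lemma StrongConvexOn.add_inner_sub_add_le (hh : StrongConvexOn univ μ h) (hg : HasGradientAt h g u)
    (v : E) : h u + ⟪g, v - u⟫ + μ / 2 * ‖v - u‖ ^ 2 ≤ h v := by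
  have hg' : HasGradientAt (fun x => h x - μ / 2 * ‖x‖ ^ 2) (g - μ • u) u :=
    (hg.hasFDerivAt.sub (hasGradientAt_half_mul_norm_sq μ u).hasFDerivAt).congr_fderiv
      (by ext; simp)
  have key := (strongConvexOn_iff_convex.mp hh).add_inner_sub_le hg' v
  simp only [inner_sub_left, inner_sub_right, real_inner_smul_left,
    real_inner_self_eq_norm_sq] at key ⊢
  rw [norm_sub_sq_real, real_inner_comm u v]
  linarith

lemma le_add_inner_sub_add_of_lipschitz_gradient (hG : ∀ x, HasGradientAt h (G x) x)
    (hL : ∀ x y, ‖G x - G y‖ ≤ L * ‖x - y‖) (u v : E) :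
    h v ≤ h u + ⟪G u, v - u⟫ + L / 2 * ‖v - u‖ ^ 2 := by
  set φ : ℝ → ℝ := fun s => h (AffineMap.lineMap u v s) - s * ⟪G u, v - u⟫
    - L / 2 * s ^ 2 * ‖v - u‖ ^ 2
  have hφ : ∀ s, HasDerivAt φ
      (⟪G (AffineMap.lineMap u v s), v - u⟫ - ⟪G u, v - u⟫ - L * s * ‖v - u‖ ^ 2) s := by
    intro s
    have := ((HasGradientAt.hasDerivAt_comp_lineMap (u := u) (v := v) (hG _)).sub
      ((hasDerivAt_id s).mul_const ⟪G u, v - u⟫)).sub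
      (((hasDerivAt_pow 2 s).const_mul (L / 2)).mul_const (‖v - u‖ ^ 2))
    refine this.congr_deriv ?_
    norm_num [mul_comm]
    ring
  have hanti : AntitoneOn φ (Ici 0) := by
    refine antitoneOn_of_hasDerivWithinAt_nonpos (convex_Ici 0)
      (fun s _ => (hφ s).continuousAt.continuousWithinAt) (fun s _ => (hφ s).hasDerivWithinAt) ?_
    intro s hs
    rw [interior_Ici, Set.mem_Ioi] at hs
    have hlip : ⟪G (AffineMap.lineMap u v s) - G u, v - u⟫ ≤ L * s * ‖v - u‖ ^ 2 := calc
      _ ≤ ‖G (AffineMap.lineMap u v s) - G u‖ * ‖v - u‖ := real_inner_le_norm _ _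
      _ ≤ L * ‖AffineMap.lineMap u v s - u‖ * ‖v - u‖ := by gcongr; exact hL _ _
      _ = L * s * ‖v - u‖ ^ 2 := by
        rw [AffineMap.lineMap_apply_module', add_sub_cancel_right, norm_smul,
          Real.norm_of_nonneg hs.le]
        ring
    rw [inner_sub_left] at hlip
    linarith
  have := hanti self_mem_Ici (mem_Ici.2 zero_le_one) zero_le_one
  simp [φ] at this
  linarith

lemma ConvexOn.norm_sub_sq_le_of_lipschitz_gradient (hh : ConvexOn ℝ univ h)
    (hG : ∀ x, HasGradientAt h (G x) x) (hL0 : 0 < L) (hL : ∀ x y, ‖G x - G y‖ ≤ L * ‖x - y‖)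
    (u v : E) : ‖G u - G v‖ ^ 2 ≤ 2 * L * (h u - h v - ⟪G v, u - v⟫) := by
  set w := G u - G v
  -- test the lower and the upper first-order bound at the gradient step `u - L⁻¹ (G u - G v)`
  have hlow := hh.add_inner_sub_le (hG v) (u - L⁻¹ • w)
  have hup := le_add_inner_sub_add_of_lipschitz_gradient hG hL u (u - L⁻¹ • w)
  have hw : L⁻¹ * ⟪G u, w⟫ - L⁻¹ * ⟪G v, w⟫ = L⁻¹ * ‖w‖ ^ 2 := by
    rw [← mul_sub, ← inner_sub_left, real_inner_self_eq_norm_sq]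
  rw [sub_right_comm, inner_sub_right, real_inner_smul_right] at hlow
  rw [sub_sub_cancel_left, inner_neg_right, real_inner_smul_right, norm_neg, norm_smul,
    Real.norm_of_nonneg (inv_nonneg.2 hL0.le)] at hup
  have key : ‖w‖ ^ 2 / (2 * L) ≤ h u - h v - ⟪G v, u - v⟫ := by
    have : ‖w‖ ^ 2 / (2 * L) = L⁻¹ * ‖w‖ ^ 2 - L / 2 * (L⁻¹ * ‖w‖) ^ 2 := by
      field_simp; ring
    linarith
  rwa [div_le_iff₀ (by positivity), mul_comm] at key

lemma StrongConvexOn.le_of_lipschitz_gradient [Nontrivial E] (hh : StrongConvexOn univ μ h)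
    (hG : ∀ x, HasGradientAt h (G x) x) (hL : ∀ x y, ‖G x - G y‖ ≤ L * ‖x - y‖) : μ ≤ L := by
  obtain ⟨u, hu⟩ := exists_ne (0 : E)
  have h₁ := hh.add_inner_sub_add_le (hG 0) u
  have h₂ := hh.add_inner_sub_add_le (hG u) 0
  have hmono : ⟪G u - G 0, u⟫ ≤ L * ‖u‖ ^ 2 := calc
    _ ≤ ‖G u - G 0‖ * ‖u‖ := real_inner_le_norm _ _
    _ ≤ L * ‖u - 0‖ * ‖u‖ := by gcongr; exact hL _ _
    _ = L * ‖u‖ ^ 2 := by rw [sub_zero]; ring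
  simp only [sub_zero, zero_sub, norm_neg, inner_neg_right] at h₁ h₂
  rw [inner_sub_left] at hmono
  have hu2 : 0 < ‖u‖ ^ 2 := by positivity
  nlinarith

end ConvexAnalysis

section SGD

lemma norm_sq_le_two_mul_norm_sub_sq_add {E : Type*} [SeminormedAddCommGroup E] (a b : E) :
    ‖a‖ ^ 2 ≤ 2 * ‖a - b‖ ^ 2 + 2 * ‖b‖ ^ 2 := calc
  ‖a‖ ^ 2 ≤ (‖a - b‖ + ‖b‖) ^ 2 := by gcongr; exact norm_le_norm_sub_add a b
  _ ≤ 2 * ‖a - b‖ ^ 2 + 2 * ‖b‖ ^ 2 := by linarith [add_sq_le (a := ‖a - b‖) (b := ‖b‖)]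

variable {E : Type*} [NormedAddCommGroup E] [InnerProductSpace ℝ E]

lemma norm_sub_smul_sub_sq (x y g : E) (α : ℝ) :
    ‖x - α • g - y‖ ^ 2 = ‖x - y‖ ^ 2 - 2 * α * ⟪x - y, g⟫ + α ^ 2 * ‖g‖ ^ 2 := by
  rw [sub_right_comm, norm_sub_sq_real, real_inner_smul_right, norm_smul, mul_pow,
    Real.norm_eq_abs, sq_abs]
  ring

lemma sgd_step_le {F : E → ℝ} {G₁ G₀ : E → E} {p α μ 𝓛 : ℝ} {x xs : E}
    (hp0 : 0 ≤ p) (hp1 : p ≤ 1) (hα : 0 ≤ α) (hα𝓛 : 2 * α * 𝓛 ≤ 1) (hmin : F xs ≤ F x)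
    (hsc : F x + ⟪p • G₁ x + (1 - p) • G₀ x, xs - x⟫ + μ / 2 * ‖xs - x‖ ^ 2 ≤ F xs)
    (hes : p * ‖G₁ x - G₁ xs‖ ^ 2 + (1 - p) * ‖G₀ x - G₀ xs‖ ^ 2 ≤ 2 * 𝓛 * (F x - F xs)) :
    p * ‖x - α • G₁ x - xs‖ ^ 2 + (1 - p) * ‖x - α • G₀ x - xs‖ ^ 2 ≤
      (1 - α * μ) * ‖x - xs‖ ^ 2 + 2 * α ^ 2 * (p * ‖G₁ xs‖ ^ 2 + (1 - p) * ‖G₀ xs‖ ^ 2) := by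
  have hmean : ⟪p • G₁ x + (1 - p) • G₀ x, xs - x⟫ =
      -(p * ⟪x - xs, G₁ x⟫ + (1 - p) * ⟪x - xs, G₀ x⟫) := by
    rw [← neg_sub x xs, inner_neg_right, inner_add_left, real_inner_smul_left,
      real_inner_smul_left, real_inner_comm (G₁ x), real_inner_comm (G₀ x)]
  rw [hmean, norm_sub_rev] at hsc
  have hvar := add_le_add
    (mul_le_mul_of_nonneg_left (norm_sq_le_two_mul_norm_sub_sq_add (G₁ x) (G₁ xs)) hp0)
    (mul_le_mul_of_nonneg_left (norm_sq_le_two_mul_norm_sub_sq_add (G₀ x) (G₀ xs))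
      (sub_nonneg.2 hp1))
  have hgap : 0 ≤ α * (F x - F xs) * (1 - 2 * α * 𝓛) :=
    mul_nonneg (mul_nonneg hα (sub_nonneg.2 hmin)) (sub_nonneg.2 hα𝓛)
  rw [norm_sub_smul_sub_sq, norm_sub_smul_sub_sq]
  nlinarith [mul_le_mul_of_nonneg_left hvar (sq_nonneg α)]

end SGD

section CoinPaths

def pathSeq {k : ℕ} (ω : Fin k → Bool) : ℕ → Bool :=
  fun j => if h : j < k then ω ⟨j, h⟩ else false

def pathProb (p : ℝ) {k : ℕ} (ω : Fin k → Bool) : ℝ := ∏ j, if ω j then p else 1 - p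

variable {p : ℝ} {k : ℕ}

lemma pathProb_nonneg (hp0 : 0 ≤ p) (hp1 : p ≤ 1) (ω : Fin k → Bool) : 0 ≤ pathProb p ω :=
  Finset.prod_nonneg fun j _ => by split <;> linarith

lemma sum_pathProb (p : ℝ) (k : ℕ) : ∑ ω : Fin k → Bool, pathProb p ω = 1 := by
  simpa [pathProb] using (Fintype.sum_pow (fun b : Bool => if b then p else 1 - p) k).symm

lemma pathProb_snoc (ω : Fin k → Bool) (b : Bool) :
    pathProb p (Fin.snoc ω b : Fin (k + 1) → Bool) = pathProb p ω * if b then p else 1 - p := by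
  simp [pathProb, Fin.prod_univ_castSucc]

lemma sum_fun_fin_succ_eq_sum_snoc (φ : (Fin (k + 1) → Bool) → ℝ) :
    ∑ ω, φ ω = ∑ ω : Fin k → Bool, ∑ b : Bool, φ (Fin.snoc ω b) := by
  rw [← (Fin.snocEquiv fun _ => Bool).sum_comp, Fintype.sum_prod_type, Finset.sum_comm]
  rfl

variable {E : Type*}

def coinIterate (T : Bool → E → E) (x₀ : E) (ξ : ℕ → Bool) : ℕ → E
  | 0 => x₀
  | k + 1 => T (ξ k) (coinIterate T x₀ ξ k)

variable (T : Bool → E → E) (x₀ : E)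

lemma coinIterate_congr {ξ ξ' : ℕ → Bool} : ∀ {k}, (∀ j < k, ξ j = ξ' j) →
    coinIterate T x₀ ξ k = coinIterate T x₀ ξ' k
  | 0, _ => rfl
  | k + 1, h => by
    rw [coinIterate, coinIterate, h k k.lt_succ_self,
      coinIterate_congr fun j hj => h j (hj.trans k.lt_succ_self)]

lemma coinIterate_pathSeq_snoc (ω : Fin k → Bool) (b : Bool) :
    coinIterate T x₀ (pathSeq (Fin.snoc ω b : Fin (k + 1) → Bool)) (k + 1) =
      T b (coinIterate T x₀ (pathSeq ω) k) := by
  rw [coinIterate, coinIterate_congr T x₀ (ξ' := pathSeq ω) fun j hj => ?_]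
  · simp only [pathSeq, k.lt_succ_self, dite_true]
    exact congrArg (T · _) (Fin.snoc_last (α := fun _ => Bool) b ω)
  · simpa [pathSeq, hj, hj.trans k.lt_succ_self] using
      Fin.snoc_castSucc (α := fun _ => Bool) b ω ⟨j, hj⟩

lemma sum_pathProb_mul_succ (V : E → ℝ) :
    ∑ ω : Fin (k + 1) → Bool, pathProb p ω * V (coinIterate T x₀ (pathSeq ω) (k + 1)) =
      ∑ ω : Fin k → Bool, pathProb p ω * (p * V (T true (coinIterate T x₀ (pathSeq ω) k)) +
        (1 - p) * V (T false (coinIterate T x₀ (pathSeq ω) k))) := by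
  rw [sum_fun_fin_succ_eq_sum_snoc]
  refine Finset.sum_congr rfl fun ω _ => ?_
  simp [pathProb_snoc, coinIterate_pathSeq_snoc]
  ring

lemma sum_pathProb_mul_le (hp0 : 0 ≤ p) (hp1 : p ≤ 1) {V : E → ℝ} {q c C : ℝ} (hq : 0 ≤ q)
    (hstep : ∀ x, p * V (T true x) + (1 - p) * V (T false x) ≤ q * V x + c)
    (hC : q * C + c ≤ C) (hC0 : 0 ≤ C) (k : ℕ) :
    ∑ ω : Fin k → Bool, pathProb p ω * V (coinIterate T x₀ (pathSeq ω) k) ≤ q ^ k * V x₀ + C := by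
  induction k with
  | zero => simp [pathProb, coinIterate, hC0]
  | succ k ih =>
    rw [sum_pathProb_mul_succ]
    calc _ ≤ ∑ ω : Fin k → Bool, pathProb p ω * (q * V (coinIterate T x₀ (pathSeq ω) k) + c) :=
          Finset.sum_le_sum fun ω _ =>
            mul_le_mul_of_nonneg_left (hstep _) (pathProb_nonneg hp0 hp1 ω)
      _ = q * ∑ ω : Fin k → Bool, pathProb p ω * V (coinIterate T x₀ (pathSeq ω) k) + c := by
          simp only [mul_add, Finset.sum_add_distrib, ← Finset.sum_mul, sum_pathProb, one_mul,
            Finset.mul_sum, mul_left_comm q]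
      _ ≤ q * (q ^ k * V x₀ + C) + c := by gcongr
      _ ≤ q ^ (k + 1) * V x₀ + C := by rw [pow_succ]; linarith

end CoinPaths

section Blocks

variable {n d : ℕ}

lemma inner_gradTot (g : Fin n → Vec d → Vec d) (x w : Blk n d) :
    ⟪gradTot g x, w⟫ = (n : ℝ)⁻¹ * ∑ i, ⟪g i (x i), w i⟫ := by
  rw [PiLp.inner_apply, Finset.mul_sum]
  exact Finset.sum_congr rfl fun i _ => real_inner_smul_left _ _ _

lemma hasGradientAt_fTot {f : Fin n → Vec d → ℝ} {g : Fin n → Vec d → Vec d} {x : Blk n d}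
    (hgrad : ∀ i, HasGradientAt (f i) (g i (x i)) (x i)) :
    HasGradientAt (fTot f) (gradTot g x) x := by
  have hblock i : HasFDerivAt (fun y : Blk n d => f i (y i))
      ((InnerProductSpace.toDual ℝ (Vec d) (g i (x i))).comp (PiLp.proj 2 _ i)) x :=
    (hgrad i).hasFDerivAt.comp x (PiLp.proj 2 (fun _ : Fin n => Vec d) i).hasFDerivAt
  refine ((HasFDerivAt.fun_sum fun i _ => hblock i).const_mul (n : ℝ)⁻¹).congr_fderiv ?_
  ext w
  simp [inner_gradTot]

lemma StrongConvexOn.fTot_add_inner_sub_add_le {f : Fin n → Vec d → ℝ}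
    {g : Fin n → Vec d → Vec d} {μ : ℝ} (hsc : ∀ i, StrongConvexOn univ μ (f i))
    {x : Blk n d} (hgrad : ∀ i, HasGradientAt (f i) (g i (x i)) (x i)) (y : Blk n d) :
    fTot f x + ⟪gradTot g x, y - x⟫ + μ / n / 2 * ‖y - x‖ ^ 2 ≤ fTot f y := by
  have hsum := Finset.sum_le_sum fun i (_ : i ∈ Finset.univ) =>
    (hsc i).add_inner_sub_add_le (hgrad i) (y i)
  have := mul_le_mul_of_nonneg_left hsum (inv_nonneg.2 (n.cast_nonneg : (0 : ℝ) ≤ n))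
  simp only [Finset.sum_add_distrib, ← Finset.mul_sum] at this
  rw [fTot, fTot, inner_gradTot, PiLp.norm_sq_eq_of_L2]
  refine (le_of_eq ?_).trans this
  simp only [WithLp.ofLp_sub, Pi.sub_apply]
  ring

lemma ConvexOn.norm_gradTot_sub_sq_le {f : Fin n → Vec d → ℝ} {g : Fin n → Vec d → Vec d}
    {L : ℝ} (hconv : ∀ i, ConvexOn ℝ univ (f i))
    (hgrad : ∀ i x, HasGradientAt (f i) (g i x) x) (hL0 : 0 < L)
    (hL : ∀ i x y, ‖g i x - g i y‖ ≤ L * ‖x - y‖) (x y : Blk n d) :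
    ‖gradTot g x - gradTot g y‖ ^ 2 ≤
      2 * (L / n) * (fTot f x - fTot f y - ⟪gradTot g y, x - y⟫) := by
  have hnorm : ‖gradTot g x - gradTot g y‖ ^ 2 =
      ((n : ℝ) ^ 2)⁻¹ * ∑ i, ‖g i (x i) - g i (y i)‖ ^ 2 := by
    rw [PiLp.norm_sq_eq_of_L2, Finset.mul_sum]
    refine Finset.sum_congr rfl fun i _ => ?_
    simp [gradTot, ← smul_sub, norm_smul, mul_pow]
  rw [hnorm, fTot, fTot, inner_gradTot]
  calc _ ≤ ((n : ℝ) ^ 2)⁻¹ * ∑ i, 2 * L * (f i (x i) - f i (y i) - ⟪g i (y i), x i - y i⟫) := by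
        gcongr with i
        exact (hconv i).norm_sub_sq_le_of_lipschitz_gradient (hgrad i) hL0 (hL i) (x i) (y i)
    _ = _ := by
        simp only [← Finset.mul_sum, Finset.sum_sub_distrib, WithLp.ofLp_sub, Pi.sub_apply]
        field_simp

end Blocks

section Consensus

variable {n d : ℕ}

/-- `x ↦ (xᵢ - x̄)ᵢ`, the orthogonal projection onto the complement of the consensus space. -/
def centering (n d : ℕ) : Blk n d →L[ℝ] Blk n d where
  toFun x := WithLp.toLp 2 fun i => x i - blkAvg x
  map_add' x y := by
    ext i : 1
    simp only [blkAvg, PiLp.add_apply, Finset.sum_add_distrib, smul_add]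
    abel
  map_smul' c x := by
    ext i : 1
    simp only [blkAvg, PiLp.smul_apply, RingHom.id_apply, ← Finset.smul_sum, smul_sub, smul_comm c]
  cont := by
    show Continuous fun x : Blk n d => WithLp.toLp 2 fun i => x i - (n : ℝ)⁻¹ • ∑ j, x j
    fun_prop

lemma centering_apply (x : Blk n d) (i : Fin n) : centering n d x i = x i - blkAvg x := rfl

lemma gradPsi_eq_smul_centering (x : Blk n d) : gradPsi x = (n : ℝ)⁻¹ • centering n d x := rfl

lemma psi_eq_norm_centering_sq (x : Blk n d) : psi x = (2 * n : ℝ)⁻¹ * ‖centering n d x‖ ^ 2 := by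
  rw [psi, PiLp.norm_sq_eq_of_L2]
  rfl

lemma inner_centering_centering (hn : 0 < n) (x y : Blk n d) :
    ⟪centering n d x, centering n d y⟫ = ⟪centering n d x, y⟫ := by
  have hsum : ∑ i, centering n d x i = 0 := by
    rw [Finset.sum_congr rfl fun i _ => centering_apply x i, Finset.sum_sub_distrib,
      Finset.sum_const, Finset.card_univ, Fintype.card_fin, blkAvg, ← Nat.cast_smul_eq_nsmul ℝ,
      smul_smul, mul_inv_cancel₀ (Nat.cast_ne_zero.2 hn.ne' : (n : ℝ) ≠ 0), one_smul, sub_self]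
  rw [PiLp.inner_apply, PiLp.inner_apply]
  simp_rw [centering_apply y, inner_sub_right, Finset.sum_sub_distrib, ← sum_inner, hsum,
    inner_zero_left, sub_zero]

lemma hasGradientAt_psi (hn : 0 < n) (x : Blk n d) : HasGradientAt psi (gradPsi x) x := by
  have h := ((centering n d).hasFDerivAt (x := x)).norm_sq.const_mul (2 * n : ℝ)⁻¹
  simp only [← psi_eq_norm_centering_sq] at h
  refine h.congr_fderiv ?_
  ext y
  simp [gradPsi_eq_smul_centering, inner_centering_centering hn]
  ring

lemma psi_sub_psi_sub_inner (hn : 0 < n) (x y : Blk n d) :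
    psi y - psi x - ⟪gradPsi x, y - x⟫ = n / 2 * ‖gradPsi y - gradPsi x‖ ^ 2 := by
  have hx : ⟪centering n d x, y - x⟫ = ⟪centering n d x, centering n d y - centering n d x⟫ := by
    rw [← map_sub, inner_centering_centering hn]
  rw [psi_eq_norm_centering_sq, psi_eq_norm_centering_sq, gradPsi_eq_smul_centering,
    gradPsi_eq_smul_centering, real_inner_smul_left, hx, ← smul_sub, norm_smul, mul_pow,
    Real.norm_of_nonneg (by positivity), norm_sub_sq_real, inner_sub_right,
    real_inner_self_eq_norm_sq, real_inner_comm]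
  field_simp
  ring

end Consensus

section L2GD

variable {n d : ℕ} {f : Fin n → Vec d → ℝ} {g : Fin n → Vec d → Vec d} {lam p : ℝ}

lemma hasGradientAt_FF (hn : 0 < n) {x : Blk n d}
    (hgrad : ∀ i, HasGradientAt (f i) (g i (x i)) (x i)) :
    HasGradientAt (FF f lam) (gradTot g x + lam • gradPsi x) x := by
  refine ((hasGradientAt_fTot hgrad).hasFDerivAt.add
    ((hasGradientAt_psi hn x).hasFDerivAt.const_mul lam)).congr_fderiv ?_
  ext
  simp

lemma FF_sub_FF_of_isMinimizer (hn : 0 < n) {xs : Blk n d}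
    (hgrad : ∀ i, HasGradientAt (f i) (g i (xs i)) (xs i)) (hxs : ∀ y, FF f lam xs ≤ FF f lam y)
    (x : Blk n d) :
    FF f lam x - FF f lam xs = (fTot f x - fTot f xs - ⟪gradTot g xs, x - xs⟫) +
      lam * (psi x - psi xs - ⟪gradPsi xs, x - xs⟫) := by
  have hzero : gradTot g xs + lam • gradPsi xs = 0 :=
    (InnerProductSpace.toDual ℝ (Blk n d)).map_eq_zero_iff.1 <|
      IsLocalMin.hasFDerivAt_eq_zero (Filter.Eventually.of_forall hxs)
        (hasGradientAt_FF hn hgrad).hasFDerivAt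
  have hinner := congrArg (⟪·, x - xs⟫) hzero
  simp only [inner_add_left, real_inner_smul_left, inner_zero_left] at hinner
  rw [FF, FF]
  linarith

lemma FF_add_inner_sub_add_le (hn : 0 < n) (hlam : 0 ≤ lam) {μ : ℝ}
    (hsc : ∀ i, StrongConvexOn univ μ (f i)) {x : Blk n d}
    (hgrad : ∀ i, HasGradientAt (f i) (g i (x i)) (x i)) (y : Blk n d) :
    FF f lam x + ⟪gradTot g x + lam • gradPsi x, y - x⟫ + μ / n / 2 * ‖y - x‖ ^ 2 ≤ FF f lam y := by
  have hf := StrongConvexOn.fTot_add_inner_sub_add_le hsc hgrad y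
  have hψ : 0 ≤ lam * (psi y - psi x - ⟪gradPsi x, y - x⟫) := by
    rw [psi_sub_psi_sub_inner hn]
    positivity
  rw [FF, FF, inner_add_left, real_inner_smul_left]
  linarith

def l2gdSmoothness (n : ℕ) (L lam p : ℝ) : ℝ := (n : ℝ)⁻¹ * max (L / (1 - p)) (lam / p)

def l2gdVariance (g : Fin n → Vec d → Vec d) (lam p : ℝ) (xs : Blk n d) : ℝ :=
  ((n : ℝ) ^ 2)⁻¹ *
    ∑ i, ((1 / (1 - p)) * ‖g i (xs i)‖ ^ 2 + (lam ^ 2 / p) * ‖xs i - blkAvg xs‖ ^ 2)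

lemma div_le_l2gdSmoothness (hp0 : 0 < p) (hp1 : p < 1) {L : ℝ} (hL : 0 ≤ L) :
    L / n ≤ l2gdSmoothness n L lam p := by
  rw [l2gdSmoothness, div_eq_inv_mul]
  gcongr
  exact (le_div_self hL (sub_pos.2 hp1) (by linarith)).trans (le_max_left _ _)

lemma l2gdVariance_nonneg (hp0 : 0 < p) (hp1 : p < 1) (xs : Blk n d) :
    0 ≤ l2gdVariance g lam p xs := by
  have : 0 < 1 - p := sub_pos.2 hp1
  unfold l2gdVariance
  positivity

lemma l2gd_expected_smoothness (hn : 0 < n) (hlam : 0 ≤ lam) (hp0 : 0 < p) (hp1 : p < 1)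
    {L : ℝ} (hconv : ∀ i, ConvexOn ℝ univ (f i)) (hgrad : ∀ i x, HasGradientAt (f i) (g i x) x)
    (hL0 : 0 < L) (hL : ∀ i x y, ‖g i x - g i y‖ ≤ L * ‖x - y‖) {xs : Blk n d}
    (hxs : ∀ y, FF f lam xs ≤ FF f lam y) (x : Blk n d) :
    p * ‖p⁻¹ • (lam • gradPsi x) - p⁻¹ • (lam • gradPsi xs)‖ ^ 2 +
        (1 - p) * ‖(1 - p)⁻¹ • gradTot g x - (1 - p)⁻¹ • gradTot g xs‖ ^ 2 ≤
      2 * l2gdSmoothness n L lam p * (FF f lam x - FF f lam xs) := by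
  set Df := fTot f x - fTot f xs - ⟪gradTot g xs, x - xs⟫
  set Dψ := psi x - psi xs - ⟪gradPsi xs, x - xs⟫
  have hf : ‖gradTot g x - gradTot g xs‖ ^ 2 ≤ 2 * (L / n) * Df :=
    ConvexOn.norm_gradTot_sub_sq_le hconv hgrad hL0 hL x xs
  have hψ : Dψ = n / 2 * ‖gradPsi x - gradPsi xs‖ ^ 2 := psi_sub_psi_sub_inner hn xs x
  have hDψ : 0 ≤ lam * Dψ := by rw [hψ]; positivity
  have hnR : (0 : ℝ) < n := Nat.cast_pos.2 hn
  have h𝓛f : (n : ℝ)⁻¹ * (L / (1 - p)) ≤ l2gdSmoothness n L lam p := by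
    unfold l2gdSmoothness; gcongr; exact le_max_left _ _
  have h𝓛ψ : (n : ℝ)⁻¹ * (lam / p) ≤ l2gdSmoothness n L lam p := by
    unfold l2gdSmoothness; gcongr; exact le_max_right _ _
  rw [FF_sub_FF_of_isMinimizer hn (fun i => hgrad i _) hxs x, smul_smul, smul_smul, ← smul_sub,
    ← smul_sub, norm_smul, norm_smul, mul_pow, mul_pow, Real.norm_eq_abs, Real.norm_eq_abs,
    sq_abs, sq_abs]
  calc _ = 2 * ((n : ℝ)⁻¹ * (lam / p)) * (lam * Dψ) +
        (1 - p)⁻¹ * ‖gradTot g x - gradTot g xs‖ ^ 2 := by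
        rw [hψ]; field_simp
    _ ≤ 2 * l2gdSmoothness n L lam p * (lam * Dψ) + (1 - p)⁻¹ * (2 * (L / n) * Df) := by
        gcongr
    _ ≤ 2 * l2gdSmoothness n L lam p * (lam * Dψ) + 2 * l2gdSmoothness n L lam p * Df := by
        have hDf : 0 ≤ Df := by
          nlinarith [sq_nonneg ‖gradTot g x - gradTot g xs‖, div_pos hL0 hnR]
        have : (1 - p)⁻¹ * (2 * (L / n) * Df) = 2 * ((n : ℝ)⁻¹ * (L / (1 - p))) * Df := by
          field_simp
        rw [this]
        gcongr
    _ = _ := by ring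

lemma l2gdVariance_eq (hp0 : 0 < p) (hp1 : p < 1) (xs : Blk n d) :
    p * ‖p⁻¹ • (lam • gradPsi xs)‖ ^ 2 + (1 - p) * ‖(1 - p)⁻¹ • gradTot g xs‖ ^ 2 =
      l2gdVariance g lam p xs := by
  have hq : 1 - p ≠ 0 := (sub_pos.2 hp1).ne'
  have hψ : ‖gradPsi xs‖ ^ 2 = ((n : ℝ) ^ 2)⁻¹ * ∑ i, ‖xs i - blkAvg xs‖ ^ 2 := by
    rw [PiLp.norm_sq_eq_of_L2, Finset.mul_sum]
    refine Finset.sum_congr rfl fun i _ => ?_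
    simp [gradPsi, norm_smul, mul_pow]
  have hf : ‖gradTot g xs‖ ^ 2 = ((n : ℝ) ^ 2)⁻¹ * ∑ i, ‖g i (xs i)‖ ^ 2 := by
    rw [PiLp.norm_sq_eq_of_L2, Finset.mul_sum]
    refine Finset.sum_congr rfl fun i _ => ?_
    simp [gradTot, norm_smul, mul_pow]
  rw [smul_smul, norm_smul, norm_smul, mul_pow, mul_pow, hψ, hf, l2gdVariance,
    Finset.sum_add_distrib, ← Finset.mul_sum, ← Finset.mul_sum]
  simp only [Real.norm_eq_abs, sq_abs]
  field_simp
  ring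

def l2gdMap (g : Fin n → Vec d → Vec d) (lam p α : ℝ) (b : Bool) (x : Blk n d) : Blk n d :=
  if b then x - α • (p⁻¹ • (lam • gradPsi x)) else x - α • ((1 - p)⁻¹ • gradTot g x)

lemma l2gdIter_eq_coinIterate (α : ℝ) (x₀ : Blk n d) (ξ : ℕ → Bool) :
    l2gdIter g lam p α x₀ ξ = coinIterate (l2gdMap g lam p α) x₀ ξ := by
  funext k
  induction k with
  | zero => rfl
  | succ k ih => rw [l2gdIter, coinIterate, ih]; rfl

lemma l2gd_step_le {L μ α : ℝ} (hn : 0 < n) (hlam : 0 ≤ lam) (hp0 : 0 < p) (hp1 : p < 1)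
    (hgrad : ∀ i x, HasGradientAt (f i) (g i x) x) (hL0 : 0 < L)
    (hL : ∀ i x y, ‖g i x - g i y‖ ≤ L * ‖x - y‖) (hμ : 0 ≤ μ)
    (hsc : ∀ i, StrongConvexOn univ μ (f i))
    {xs : Blk n d} (hxs : ∀ y, FF f lam xs ≤ FF f lam y) (hα : 0 ≤ α)
    (hα𝓛 : 2 * α * l2gdSmoothness n L lam p ≤ 1) (x : Blk n d) :
    p * ‖l2gdMap g lam p α true x - xs‖ ^ 2 + (1 - p) * ‖l2gdMap g lam p α false x - xs‖ ^ 2 ≤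
      (1 - α * μ / n) * ‖x - xs‖ ^ 2 + 2 * α ^ 2 * l2gdVariance g lam p xs := by
  have hconv i : ConvexOn ℝ univ (f i) :=
    (hsc i).convexOn fun r => by simp; positivity
  have hmean : p • p⁻¹ • (lam • gradPsi x) + (1 - p) • (1 - p)⁻¹ • gradTot g x =
      gradTot g x + lam • gradPsi x := by
    rw [smul_inv_smul₀ hp0.ne', smul_inv_smul₀ (sub_pos.2 hp1).ne', add_comm]
  rw [← l2gdVariance_eq hp0 hp1, mul_div_assoc]
  refine sgd_step_le (G₁ := fun y => p⁻¹ • (lam • gradPsi y))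
    (G₀ := fun y => (1 - p)⁻¹ • gradTot g y) hp0.le hp1.le hα hα𝓛 (hxs x) ?_
    (l2gd_expected_smoothness hn hlam hp0 hp1 hconv hgrad hL0 hL hxs x)
  simpa only [hmean, div_div] using FF_add_inner_sub_add_le hn hlam hsc (fun i => hgrad i _) xs


end L2GD

/-- convergence of L2GD: if each `fᵢ` is differentiable, `L`-smooth and
`μ`-strongly convex with `μ > 0`, `λ ≥ 0`, `0 < p < 1`, `x(λ)` is the minimizer of
`F = f + λψ`, `𝓛 = (1/n) max{L/(1−p), λ/p}`,
`σ² = (1/n²) Σᵢ [(1/(1−p))‖∇fᵢ(xᵢ(λ))‖² + (λ²/p)‖xᵢ(λ) − x̄(λ)‖²]`, and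
`0 < α ≤ 1/(2𝓛)`, then for every `k`, the expectation of `‖x^k − x(λ)‖²` over the
i.i.d. Bernoulli(`p`) coin tosses (a finite weighted sum over all paths
`ω : Fin k → Bool`, each path having probability `∏ⱼ p^{ωⱼ}(1−p)^{1−ωⱼ}`) is at most
`(1 − αμ/n)^k ‖x⁰ − x(λ)‖² + 2nασ²/μ`. -/
theorem stmt15 (n d : ℕ) (hn : 0 < n) (L μ lam p α : ℝ) (hμ : 0 < μ)
    (hlam : 0 ≤ lam) (hp0 : 0 < p) (hp1 : p < 1)
    (f : Fin n → Vec d → ℝ) (g : Fin n → Vec d → Vec d)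
    (hgrad : ∀ i (x : Vec d), HasGradientAt (f i) (g i x) x)
    (hsmooth : ∀ i (x y : Vec d), ‖g i x - g i y‖ ≤ L * ‖x - y‖)
    (hsc : ∀ i, StrongConvexOn Set.univ μ (f i))
    (xlam : Blk n d) (hxlam : ∀ y : Blk n d, FF f lam xlam ≤ FF f lam y)
    (hα0 : 0 < α)
    (hα : α ≤ 1 / (2 * ((n : ℝ)⁻¹ * max (L / (1 - p)) (lam / p))))
    (x0 : Blk n d) :
    ∀ k : ℕ,
      ∑ ω : Fin k → Bool,
          (∏ j, if ω j then p else 1 - p) *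
            ‖l2gdIter g lam p α x0 (fun j => if h : j < k then ω ⟨j, h⟩ else false) k
                - xlam‖ ^ 2 ≤
        (1 - α * μ / n) ^ k * ‖x0 - xlam‖ ^ 2 +
          2 * n * α *
              (((n : ℝ) ^ 2)⁻¹ *
                ∑ i, ((1 / (1 - p)) * ‖g i (xlam i)‖ ^ 2 +
                  (lam ^ 2 / p) * ‖xlam i - blkAvg xlam‖ ^ 2)) / μ := by
  intro k
  rcases subsingleton_or_nontrivial (Vec d) with hd | hd
  · have hzero (y : Blk n d) : y = 0 := PiLp.ext fun i => Subsingleton.elim _ _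
    simp [hzero (l2gdIter _ _ _ _ _ _ _), hzero x0, hzero xlam, Subsingleton.elim _ (0 : Vec d)]
  -- `μ ≤ L` is what makes the contraction factor `1 - αμ/n` nonnegative
  have hμL : μ ≤ L := (hsc ⟨0, hn⟩).le_of_lipschitz_gradient (hgrad _) (hsmooth _)
  have hμ𝓛 : μ / n ≤ l2gdSmoothness n L lam p :=
    (div_le_div_of_nonneg_right hμL n.cast_nonneg).trans
      (div_le_l2gdSmoothness hp0 hp1 (hμ.le.trans hμL))
  have h𝓛 : 0 < l2gdSmoothness n L lam p := (div_pos hμ (Nat.cast_pos.2 hn)).trans_le hμ𝓛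
  have hα𝓛 : 2 * α * l2gdSmoothness n L lam p ≤ 1 := by
    have := (le_div_iff₀ (by positivity : (0 : ℝ) < 2 * l2gdSmoothness n L lam p)).1 hα
    linarith
  have hq : 0 ≤ 1 - α * μ / n := by
    rw [sub_nonneg, mul_div_assoc]
    nlinarith
  have hσ := l2gdVariance_nonneg (g := g) (lam := lam) hp0 hp1 xlam
  have hbound := sum_pathProb_mul_le (l2gdMap g lam p α) x0 hp0.le hp1.le
    (V := fun y => ‖y - xlam‖ ^ 2) hq
    (l2gd_step_le hn hlam hp0 hp1 hgrad (hμ.trans_le hμL) hsmooth hμ.le hsc hxlam hα0.le hα𝓛)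
    (C := 2 * n * α * l2gdVariance g lam p xlam / μ) (le_of_eq (by field_simp; ring))
    (by positivity) k
  simp only [l2gdIter_eq_coinIterate]
  exact hbound
end
end
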